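/- Let V be a complex vector space equipped with two inner products ⟨·,·⟩₁ and ⟨·,·⟩₂, and fix θ₀ ∈ (0,π). Suppose the two inner products define the same θ₀ angle, i.e., for all nonzero x, y ∈ V, Re⟨x,y⟩₁ = cos(θ₀)·‖x‖₁‖y‖₁ if and only if Re⟨x,y⟩₂ = cos(θ₀)·‖x‖₂‖y‖₂. Then there exists a constant c > 0 such that ⟨x,y⟩₂ = c·⟨x,y⟩₁ for all x, y ∈ V. -/

import Mathlib

/-!
Write `B(x, y) = Re⟪x, y⟫`, `Q x = B(x, x)`, `k = cos θ₀` and `s = sin θ₀ ≠ 0`.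
If `B₁(x, y) = 0`, the two vectors `v± = (k ‖y‖₁) x ± (s ‖x‖₁) y` make the `⟪·,·⟫₁`-angle `θ₀`
with `x`, hence also the `⟪·,·⟫₂`-angle `θ₀`; squaring these two identities and subtracting
them forces `B₂(x, y) = 0` (for `k = 0` this is the hypothesis itself). So
`⟪·,·⟫₂`-orthogonality follows from `⟪·,·⟫₁`-orthogonality, and projecting `y` onto `x` gives
`B₂(x, y) Q₁ x = B₁(x, y) Q₂ x`. Symmetrising, the ratio `Q₂ / Q₁` agrees at `x` and `y`
whenever `B₁(x, y) ≠ 0`, and through `x + y` in general; so `B₂ = c B₁`, and the imaginary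
parts follow from `Im⟪x, y⟫ = -Re⟪x, I y⟫`.
-/

open RCLike

namespace InnerProductSpace.Core

variable {𝕜 V : Type*} [RCLike 𝕜] [AddCommGroup V] [Module 𝕜 V]

def HasCosAngle (p : InnerProductSpace.Core 𝕜 V) (x y : V) (k : ℝ) : Prop :=
  re (p.inner x y) = k * (√(re (p.inner x x)) * √(re (p.inner y y)))

section Basic

variable (p : InnerProductSpace.Core 𝕜 V)

lemma re_inner_comm (x y : V) : re (p.inner x y) = re (p.inner y x) :=
  inner_re_symm (c := p.toCore) x y

lemma inner_zero_left' (x : V) : p.inner 0 x = 0 :=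
  inner_zero_left (c := p.toCore) x

lemma inner_zero_right' (x : V) : p.inner x 0 = 0 :=
  inner_zero_right (c := p.toCore) x

lemma re_inner_self_pos {x : V} (hx : x ≠ 0) : 0 < re (p.inner x x) := by
  refine (p.re_inner_nonneg x).lt_of_ne fun h ↦ (inner_self_ne_zero (cd := p)).2 hx ?_
  rw [← inner_self_ofReal_re (c := p.toCore), ← h, ofReal_zero]

lemma re_inner_smul_add_smul_right (a b : ℝ) (x y z : V) :
    re (p.inner z ((a : 𝕜) • x + (b : 𝕜) • y)) = a * re (p.inner z x) + b * re (p.inner z y) := by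
  rw [inner_add_right (c := p.toCore), inner_smul_ofReal_right (c := p.toCore),
    inner_smul_ofReal_right (c := p.toCore), map_add, re_mul_ofReal, re_mul_ofReal]
  ring

lemma re_inner_sub_smul_right (t : ℝ) (x y z : V) :
    re (p.inner z (y - (t : 𝕜) • x)) = re (p.inner z y) - t * re (p.inner z x) := by
  rw [inner_sub_right (c := p.toCore), inner_smul_ofReal_right (c := p.toCore), map_sub,
    re_mul_ofReal, mul_comm]

lemma re_inner_smul_add_smul_self (a b : ℝ) (x y : V) :
    re (p.inner ((a : 𝕜) • x + (b : 𝕜) • y) ((a : 𝕜) • x + (b : 𝕜) • y)) =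
      a ^ 2 * re (p.inner x x) + 2 * a * b * re (p.inner x y) + b ^ 2 * re (p.inner y y) := by
  rw [re_inner_smul_add_smul_right, re_inner_comm p _ x, re_inner_comm p _ y,
    re_inner_smul_add_smul_right, re_inner_smul_add_smul_right, re_inner_comm p y x]
  ring

lemma HasCosAngle.sq {x y : V} {k : ℝ} (h : p.HasCosAngle x y k) :
    re (p.inner x y) ^ 2 = k ^ 2 * (re (p.inner x x) * re (p.inner y y)) := by
  rw [h, mul_pow, mul_pow, Real.sq_sqrt (p.re_inner_nonneg x), Real.sq_sqrt (p.re_inner_nonneg y)]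

lemma hasCosAngle_smul_add_smul {x y : V} (hxy : re (p.inner x y) = 0) {k s : ℝ}
    (hks : k ^ 2 + s ^ 2 = 1) :
    p.HasCosAngle x
      (((k * √(re (p.inner y y)) : ℝ) : 𝕜) • x + ((s * √(re (p.inner x x)) : ℝ) : 𝕜) • y) k := by
  set a := √(re (p.inner x x))
  set b := √(re (p.inner y y))
  have ha2 : a ^ 2 = re (p.inner x x) := Real.sq_sqrt (p.re_inner_nonneg x)
  have hb2 : b ^ 2 = re (p.inner y y) := Real.sq_sqrt (p.re_inner_nonneg y)
  have hv : re (p.inner (((k * b : ℝ) : 𝕜) • x + ((s * a : ℝ) : 𝕜) • y)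
      (((k * b : ℝ) : 𝕜) • x + ((s * a : ℝ) : 𝕜) • y)) = (a * b) ^ 2 := by
    rw [re_inner_smul_add_smul_self, hxy, ← ha2, ← hb2]
    linear_combination a ^ 2 * b ^ 2 * hks
  rw [HasCosAngle, hv, Real.sqrt_sq (by positivity), re_inner_smul_add_smul_right, hxy]
  linear_combination k * b * ha2.symm

end Basic

variable {p₁ p₂ : InnerProductSpace.Core 𝕜 V}

theorem re_inner_eq_zero_of_hasCosAngle_imp {k : ℝ} (hk : k ^ 2 < 1)
    (hangle : ∀ x y : V, x ≠ 0 → y ≠ 0 → p₁.HasCosAngle x y k → p₂.HasCosAngle x y k)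
    {x y : V} (hx : x ≠ 0) (hy : y ≠ 0) (hxy : re (p₁.inner x y) = 0) :
    re (p₂.inner x y) = 0 := by
  by_cases hk0 : k = 0
  · subst hk0
    simpa [HasCosAngle] using hangle x y hx hy (by simp [HasCosAngle, hxy])
  set a := √(re (p₁.inner x x))
  set b := √(re (p₁.inner y y))
  have ha : 0 < a := Real.sqrt_pos.2 (p₁.re_inner_self_pos hx)
  have hb : 0 < b := Real.sqrt_pos.2 (p₁.re_inner_self_pos hy)
  have hP : 0 < re (p₂.inner x x) := p₂.re_inner_self_pos hx
  set s := √(1 - k ^ 2)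
  have hs : 0 < s := Real.sqrt_pos.2 (by linarith)
  have hks : k ^ 2 + s ^ 2 = 1 := by rw [Real.sq_sqrt (by linarith)]; ring
  have key : ∀ t : ℝ, k ^ 2 + t ^ 2 = 1 →
      (k * b * re (p₂.inner x x) + t * a * re (p₂.inner x y)) ^ 2 =
        k ^ 2 * (re (p₂.inner x x) * ((k * b) ^ 2 * re (p₂.inner x x) +
          2 * (k * b) * (t * a) * re (p₂.inner x y) + (t * a) ^ 2 * re (p₂.inner y y))) := by
    intro t ht
    have h₁ := p₁.hasCosAngle_smul_add_smul hxy ht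
    have hv : ((k * b : ℝ) : 𝕜) • x + ((t * a : ℝ) : 𝕜) • y ≠ 0 := by
      intro hv
      have h₀ := p₁.re_inner_smul_add_smul_right (k * b) (t * a) x y x
      rw [hv, inner_zero_right', map_zero, hxy, mul_zero, add_zero] at h₀
      exact mul_ne_zero (mul_ne_zero hk0 hb.ne') (p₁.re_inner_self_pos hx).ne' h₀.symm
    have h₂ := (hangle _ _ hx hv h₁).sq
    rwa [re_inner_smul_add_smul_right, re_inner_smul_add_smul_self] at h₂
  have hA : (4 * k * b * s * a * re (p₂.inner x x) * (1 - k ^ 2)) * re (p₂.inner x y) = 0 := by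
    linear_combination key s hks - key (-s) (by rwa [neg_sq])
  refine (mul_eq_zero.1 hA).resolve_left ?_
  have : 0 < 1 - k ^ 2 := by linarith
  positivity

theorem re_inner_mul_re_inner_self_eq
    (horth : ∀ x y : V, x ≠ 0 → y ≠ 0 → re (p₁.inner x y) = 0 → re (p₂.inner x y) = 0)
    (x y : V) :
    re (p₂.inner x y) * re (p₁.inner x x) = re (p₁.inner x y) * re (p₂.inner x x) := by
  rcases eq_or_ne x 0 with rfl | hx
  · simp [inner_zero_left']
  set t := re (p₁.inner x y) / re (p₁.inner x x)
  have ht : t * re (p₁.inner x x) = re (p₁.inner x y) :=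
    div_mul_cancel₀ _ (p₁.re_inner_self_pos hx).ne'
  have h₁ : re (p₁.inner x (y - (t : 𝕜) • x)) = 0 := by
    rw [re_inner_sub_smul_right, ht, sub_self]
  have h₂ : re (p₂.inner x (y - (t : 𝕜) • x)) = 0 := by
    rcases eq_or_ne (y - (t : 𝕜) • x) 0 with hu | hu
    · rw [hu, inner_zero_right', map_zero]
    · exact horth x _ hx hu h₁
  rw [re_inner_sub_smul_right, sub_eq_zero] at h₂
  rw [h₂, ← ht]
  ring

lemma re_inner_self_mul_eq_of_re_inner_ne_zero
    (hratio : ∀ x y : V,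
      re (p₂.inner x y) * re (p₁.inner x x) = re (p₁.inner x y) * re (p₂.inner x x))
    {x y : V} (hxy : re (p₁.inner x y) ≠ 0) :
    re (p₂.inner x x) * re (p₁.inner y y) = re (p₁.inner x x) * re (p₂.inner y y) := by
  have hx := hratio x y
  have hy := hratio y x
  rw [re_inner_comm p₂ y x, re_inner_comm p₁ y x] at hy
  have : re (p₁.inner x y) *
      (re (p₂.inner x x) * re (p₁.inner y y) - re (p₁.inner x x) * re (p₂.inner y y)) = 0 := by
    linear_combination re (p₁.inner x x) * hy - re (p₁.inner y y) * hx
  exact sub_eq_zero.1 ((mul_eq_zero.1 this).resolve_left hxy)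

lemma re_inner_self_mul_eq
    (hratio : ∀ x y : V,
      re (p₂.inner x y) * re (p₁.inner x x) = re (p₁.inner x y) * re (p₂.inner x x))
    {x y : V} (hx : x ≠ 0) (hy : y ≠ 0) :
    re (p₂.inner x x) * re (p₁.inner y y) = re (p₁.inner x x) * re (p₂.inner y y) := by
  by_cases hxy : re (p₁.inner x y) ≠ 0
  · exact re_inner_self_mul_eq_of_re_inner_ne_zero hratio hxy
  rw [not_not] at hxy
  have hQx := p₁.re_inner_self_pos hx
  have hQy := p₁.re_inner_self_pos hy
  have hxz : re (p₁.inner x (x + y)) ≠ 0 := by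
    simpa [inner_add_right (c := p₁.toCore), hxy] using hQx.ne'
  have hyz : re (p₁.inner y (x + y)) ≠ 0 := by
    simpa [inner_add_right (c := p₁.toCore), re_inner_comm p₁ y x, hxy] using hQy.ne'
  have hz : re (p₁.inner (x + y) (x + y)) ≠ 0 := by
    simpa [inner_add_left (c := p₁.toCore), inner_add_right (c := p₁.toCore),
      re_inner_comm p₁ y x, hxy] using (add_pos hQx hQy).ne'
  have e₁ := re_inner_self_mul_eq_of_re_inner_ne_zero hratio hxz
  have e₂ := re_inner_self_mul_eq_of_re_inner_ne_zero hratio hyz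
  refine mul_right_cancel₀ hz ?_
  linear_combination re (p₁.inner y y) * e₁ - re (p₁.inner x x) * e₂

theorem exists_re_inner_eq_mul
    (hratio : ∀ x y : V,
      re (p₂.inner x y) * re (p₁.inner x x) = re (p₁.inner x y) * re (p₂.inner x x)) :
    ∃ c : ℝ, 0 < c ∧ ∀ x y : V, re (p₂.inner x y) = c * re (p₁.inner x y) := by
  rcases subsingleton_or_nontrivial V with hV | hV
  · exact ⟨1, one_pos, fun x y ↦ by simp [Subsingleton.elim x 0, inner_zero_left']⟩
  obtain ⟨x₀, hx₀⟩ := exists_ne (0 : V)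
  have hQ₁ := p₁.re_inner_self_pos hx₀
  refine ⟨re (p₂.inner x₀ x₀) / re (p₁.inner x₀ x₀), div_pos (p₂.re_inner_self_pos hx₀) hQ₁,
    fun x y ↦ ?_⟩
  rcases eq_or_ne x 0 with rfl | hx
  · simp [inner_zero_left']
  refine mul_right_cancel₀ (p₁.re_inner_self_pos hx).ne' ?_
  rw [hratio x y, div_mul_eq_mul_div, div_mul_eq_mul_div, eq_div_iff hQ₁.ne']
  linear_combination re (p₁.inner x y) * re_inner_self_mul_eq hratio hx hx₀

theorem inner_eq_ofReal_mul_of_re_inner_eq {c : ℝ}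
    (h : ∀ x y : V, re (p₂.inner x y) = c * re (p₁.inner x y)) (x y : V) :
    p₂.inner x y = c * p₁.inner x y := by
  have him : ∀ p : InnerProductSpace.Core 𝕜 V, im (p.inner x y) = -re (p.inner x (I • y)) :=
    fun p ↦ by rw [inner_smul_right (c := p.toCore), I_mul_re, neg_neg]
  refine ext (by rw [h, re_ofReal_mul]) ?_
  rw [him p₂, im_ofReal_mul, him p₁, h, neg_mul_eq_mul_neg]

end InnerProductSpace.Core

/-- Two complex inner products defining the same `θ₀ ∈ (0, π)` (Euclidean) angle are
conformal. -/
theorem stmt_14 {V : Type*} [AddCommGroup V] [Module ℂ V]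
    (p₁ p₂ : InnerProductSpace.Core ℂ V) (θ₀ : ℝ)
    (hθ₀ : θ₀ ∈ Set.Ioo 0 Real.pi)
    (h : ∀ x y : V, x ≠ 0 → y ≠ 0 →
      ((p₁.inner x y).re =
        Real.cos θ₀ * (Real.sqrt (p₁.inner x x).re * Real.sqrt (p₁.inner y y).re) ↔
       (p₂.inner x y).re =
        Real.cos θ₀ * (Real.sqrt (p₂.inner x x).re * Real.sqrt (p₂.inner y y).re))) :
    ∃ c : ℝ, 0 < c ∧ ∀ x y : V, p₂.inner x y = (c : ℂ) * p₁.inner x y := by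
  have hk : Real.cos θ₀ ^ 2 < 1 := by
    nlinarith [Real.sin_sq_add_cos_sq θ₀, Real.sin_pos_of_pos_of_lt_pi hθ₀.1 hθ₀.2]
  obtain ⟨c, hc, hre⟩ := InnerProductSpace.Core.exists_re_inner_eq_mul
    (InnerProductSpace.Core.re_inner_mul_re_inner_self_eq fun x y hx hy ↦
      InnerProductSpace.Core.re_inner_eq_zero_of_hasCosAngle_imp (p₁ := p₁) (p₂ := p₂) hk
        (fun x y hx hy ↦ (h x y hx hy).1) hx hy)
  exact ⟨c, hc, InnerProductSpace.Core.inner_eq_ofReal_mul_of_re_inner_eq hre⟩
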